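/- arXiv:2510.23757 — 2 statements merged into one kernel-verified Lean document; each statement's English description precedes it below -/
import Mathlib

section
/- Let r ≥ 1, let g₀ ∈ ℂ, let g : Fin r → ℂ satisfy gⱼ ≠ g₀ for all j, and let q : Fin r → ℝ satisfy ∑ⱼ qⱼ = 0 and ∑ⱼ qⱼ/(gⱼ − g₀) = 0. For each j set vⱼ := qⱼ • Im W(g₀, gⱼ), where W(g₀, gⱼ) := (gⱼ − g₀)⁻¹ • (1 − g₀gⱼ, √(−1)(1 + g₀gⱼ), g₀ + gⱼ) ∈ ℂ³. Assume moreover that for every j, vⱼ ≠ 0 and sⱼ := ⟨n(g₀) × n(gⱼ), vⱼ/‖vⱼ‖⟩ ≠ 0, where n(z) := (1 + |z|²)⁻¹ • (2 Re z, 2 Im z, |z|² − 1). Then ∑ⱼ ‖vⱼ‖ · (1 − ⟨n(g₀), n(gⱼ)⟩)/sⱼ = 0. -/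
open scoped RealInnerProductSpace

/-- The vector `(x, y, z)` in Euclidean 3-space. -/
noncomputable def e3 (x y z : ℝ) : EuclideanSpace ℝ (Fin 3) :=
  (WithLp.equiv 2 _).symm ![x, y, z]

/-- The cross product in Euclidean 3-space. -/
noncomputable def cross3 (a b : EuclideanSpace ℝ (Fin 3)) : EuclideanSpace ℝ (Fin 3) :=
  e3 (a 1 * b 2 - a 2 * b 1) (a 2 * b 0 - a 0 * b 2) (a 0 * b 1 - a 1 * b 0)

/-- Inverse stereographic projection `n(z) = (1 + |z|²)⁻¹ (2 Re z, 2 Im z, |z|² - 1)`. -/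
noncomputable def invStereo (z : ℂ) : EuclideanSpace ℝ (Fin 3) :=
  (1 + ‖z‖ ^ 2)⁻¹ • e3 (2 * z.re) (2 * z.im) (‖z‖ ^ 2 - 1)

/-- The Weierstrass edge vector `W = (gⱼ - gᵢ)⁻¹ • (1 - gᵢgⱼ, √(-1)(1 + gᵢgⱼ), gᵢ + gⱼ) ∈ ℂ³`. -/
noncomputable def wVec (gi gj : ℂ) : Fin 3 → ℂ :=
  (gj - gi)⁻¹ • ![1 - gi * gj, Complex.I * (1 + gi * gj), gi + gj]

/-- Componentwise imaginary part of a vector in ℂ³, as a vector in ℝ³. -/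
noncomputable def imVec (W : Fin 3 → ℂ) : EuclideanSpace ℝ (Fin 3) :=
  e3 (W 0).im (W 1).im (W 2).im

/-- Componentwise real part of a vector in ℂ³, as a vector in ℝ³. -/
noncomputable def reVec (W : Fin 3 → ℂ) : EuclideanSpace ℝ (Fin 3) :=
  e3 (W 0).re (W 1).re (W 2).re

/-!
Each summand equals `-qⱼ`, so the sum vanishes because `∑ qⱼ = 0`. Writing `c = ⟨n(a), n(b)⟩`,
the chordal-distance identities `1 - c = 2|b - a|² / ((1 + |a|²)(1 + |b|²))` and
`1 + c = 2|1 + ā b|² / ((1 + |a|²)(1 + |b|²))`, together with `|Im W(a, b)|² = |1 + ā b|² / |b - a|²`,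
give `|Im W|² (1 - c) = 1 + c`; and `⟨n(a) × n(b), Im W⟩ = -(1 + c)`. For `v = q Im W` this makes
`‖v‖ (1 - c) / s = ‖v‖² (1 - c) / (q ⟨n(a) × n(b), Im W⟩) = q² (1 + c) / (-q (1 + c)) = -q`.
-/

lemma e3_apply (x y z : ℝ) (i : Fin 3) : e3 x y z i = ![x, y, z] i := rfl

lemma inner_e3 (x y z x' y' z' : ℝ) :
    ⟪e3 x y z, e3 x' y' z'⟫ = x * x' + y * y' + z * z' := by
  simp only [e3, WithLp.equiv_symm_apply, PiLp.inner_apply, RCLike.inner_apply,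
    Real.ringHom_apply, Fin.sum_univ_three, Matrix.cons_val_zero, Matrix.cons_val_one,
    Matrix.cons_val]
  ring

lemma one_sub_inner_invStereo (a b : ℂ) :
    1 - ⟪invStereo a, invStereo b⟫ = 2 * ‖b - a‖ ^ 2 / ((1 + ‖a‖ ^ 2) * (1 + ‖b‖ ^ 2)) := by
  simp only [invStereo, real_inner_smul_left, real_inner_smul_right, inner_e3,
    Complex.sq_norm, Complex.normSq_apply, Complex.sub_re, Complex.sub_im]
  field_simp
  ring

lemma one_add_inner_invStereo (a b : ℂ) :
    1 + ⟪invStereo a, invStereo b⟫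
      = 2 * ‖1 + (starRingEnd ℂ) a * b‖ ^ 2 / ((1 + ‖a‖ ^ 2) * (1 + ‖b‖ ^ 2)) := by
  simp only [invStereo, real_inner_smul_left, real_inner_smul_right, inner_e3,
    Complex.sq_norm, Complex.normSq_apply, Complex.add_re, Complex.add_im, Complex.mul_re,
    Complex.mul_im, Complex.conj_re, Complex.conj_im, Complex.one_re, Complex.one_im]
  field_simp
  ring

lemma normSq_sub_ne_zero_of_ne {a b : ℂ} (h : b ≠ a) :
    (b.re - a.re) * (b.re - a.re) + (b.im - a.im) * (b.im - a.im) ≠ 0 := by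
  simpa [Complex.normSq_apply] using (Complex.normSq_pos.2 (sub_ne_zero.2 h)).ne'

lemma inner_imVec_wVec_self {a b : ℂ} (h : b ≠ a) :
    ⟪imVec (wVec a b), imVec (wVec a b)⟫ = ‖1 + (starRingEnd ℂ) a * b‖ ^ 2 / ‖b - a‖ ^ 2 := by
  have hd := normSq_sub_ne_zero_of_ne h
  simp only [imVec, wVec, inner_e3, Pi.smul_apply, smul_eq_mul, Matrix.cons_val_zero,
    Matrix.cons_val_one, Matrix.cons_val_two, Matrix.head_cons, Matrix.tail_cons,
    Complex.mul_im, Complex.mul_re, Complex.inv_re, Complex.inv_im,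
    Complex.sq_norm, Complex.normSq_apply, Complex.add_re, Complex.add_im, Complex.sub_re,
    Complex.sub_im, Complex.conj_re, Complex.conj_im, Complex.one_re, Complex.one_im,
    Complex.I_re, Complex.I_im]
  -- `field_simp` only finds `hd` when the denominator is an atom
  set D := (b.re - a.re) * (b.re - a.re) + (b.im - a.im) * (b.im - a.im) with hD
  field_simp
  rw [hD]
  ring

lemma inner_cross3_invStereo_imVec_wVec {a b : ℂ} (h : b ≠ a) :
    ⟪cross3 (invStereo a) (invStereo b), imVec (wVec a b)⟫
      = -(1 + ⟪invStereo a, invStereo b⟫) := by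
  have hd := normSq_sub_ne_zero_of_ne h
  simp only [imVec, wVec, invStereo, cross3, inner_e3, e3_apply, PiLp.smul_apply,
    real_inner_smul_left, real_inner_smul_right, Pi.smul_apply, smul_eq_mul,
    Matrix.cons_val_zero, Matrix.cons_val_one, Matrix.cons_val_two, Matrix.head_cons,
    Matrix.tail_cons, Complex.mul_im, Complex.mul_re, Complex.inv_re, Complex.inv_im,
    Complex.sq_norm, Complex.normSq_apply, Complex.add_re, Complex.add_im, Complex.sub_re,
    Complex.sub_im, Complex.one_re, Complex.one_im, Complex.I_re, Complex.I_im]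
  set D := (b.re - a.re) * (b.re - a.re) + (b.im - a.im) * (b.im - a.im) with hD
  field_simp
  rw [hD]
  ring

lemma inner_imVec_wVec_self_mul_one_sub_inner_invStereo {a b : ℂ} (h : b ≠ a) :
    ⟪imVec (wVec a b), imVec (wVec a b)⟫ * (1 - ⟪invStereo a, invStereo b⟫)
      = 1 + ⟪invStereo a, invStereo b⟫ := by
  have hd : ‖b - a‖ ≠ 0 := norm_ne_zero_iff.2 (sub_ne_zero.2 h)
  rw [inner_imVec_wVec_self h, one_sub_inner_invStereo, one_add_inner_invStereo]
  field_simp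

lemma norm_smul_imVec_wVec_mul_one_sub_inner_invStereo_div {a b : ℂ} (h : b ≠ a) (q : ℝ)
    (hs : ⟪cross3 (invStereo a) (invStereo b),
      ‖q • imVec (wVec a b)‖⁻¹ • (q • imVec (wVec a b))⟫ ≠ 0) :
    ‖q • imVec (wVec a b)‖ * (1 - ⟪invStereo a, invStereo b⟫)
      / ⟪cross3 (invStereo a) (invStereo b),
          ‖q • imVec (wVec a b)‖⁻¹ • (q • imVec (wVec a b))⟫ = -q := by
  have hII := inner_imVec_wVec_self_mul_one_sub_inner_invStereo h
  rw [real_inner_smul_right, real_inner_smul_right, inner_cross3_invStereo_imVec_wVec h] at hs ⊢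
  set I := imVec (wVec a b)
  set c := ⟪invStereo a, invStereo b⟫
  have hv : ‖q • I‖ ≠ 0 := by
    rintro h0
    simp [h0] at hs
  have hnorm : ‖q • I‖ ^ 2 = q ^ 2 * ⟪I, I⟫ := by
    rw [← real_inner_self_eq_norm_sq, real_inner_smul_left, real_inner_smul_right]
    ring
  rw [div_eq_iff hs]
  field_simp
  linear_combination (1 - c) * hnorm + q ^ 2 * hII

theorem stmt_5_general (r : ℕ) (g₀ : ℂ) (g : Fin r → ℂ) (hg : ∀ j, g j ≠ g₀)
    (q : Fin r → ℝ)
    (hq1 : ∑ j, q j = 0)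
    (v : Fin r → EuclideanSpace ℝ (Fin 3))
    (hv : ∀ j, v j = q j • imVec (wVec g₀ (g j)))
    (s : Fin r → ℝ)
    (hs : ∀ j, s j = ⟪cross3 (invStereo g₀) (invStereo (g j)), ‖v j‖⁻¹ • v j⟫)
    (hs0 : ∀ j, s j ≠ 0) :
    ∑ j, ‖v j‖ * (1 - ⟪invStereo g₀, invStereo (g j)⟫) / s j = 0 := by
  have edge (j : Fin r) : ‖v j‖ * (1 - ⟪invStereo g₀, invStereo (g j)⟫) / s j = -q j := by
    have hsj := hs0 j
    rw [hs j, hv j] at hsj ⊢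
    exact norm_smul_imVec_wVec_mul_one_sub_inner_invStereo_div (hg j) (q j) hsj
  rw [Finset.sum_congr rfl fun j _ => edge j, Finset.sum_neg_distrib, hq1, neg_zero]

/-- Vanishing of the integrated mean curvature `H = ½ ∑ ℓⱼ tan(αⱼ/2)` of the dual face produced
by the discrete Weierstrass representation, with `tan(αⱼ/2) = (1 − cos αⱼ)/sin αⱼ`. -/
theorem stmt_5 (r : ℕ) (hr : 1 ≤ r) (g₀ : ℂ) (g : Fin r → ℂ) (hg : ∀ j, g j ≠ g₀)
    (q : Fin r → ℝ)
    (hq1 : ∑ j, q j = 0) (hq2 : ∑ j, (q j : ℂ) / (g j - g₀) = 0)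
    (v : Fin r → EuclideanSpace ℝ (Fin 3))
    (hv : ∀ j, v j = q j • imVec (wVec g₀ (g j)))
    (hv0 : ∀ j, v j ≠ 0)
    (s : Fin r → ℝ)
    (hs : ∀ j, s j = ⟪cross3 (invStereo g₀) (invStereo (g j)), ‖v j‖⁻¹ • v j⟫)
    (hs0 : ∀ j, s j ≠ 0) :
    ∑ j, ‖v j‖ * (1 - ⟪invStereo g₀, invStereo (g j)⟫) / s j = 0 :=
  stmt_5_general r g₀ g hg q hq1 v hv s hs hs0
end

section
/- Let m ≥ 3 and let f, ḟ : ZMod m → ℝ³. Let n ∈ ℝ³ with ‖n‖ = 1, let h ∈ ℝ, and suppose ⟨fᵢ, n⟩ = h and ⟨ḟᵢ, n⟩ = 1 for all i. For each i ∈ ZMod m let Nᵢ ∈ ℝ³ with ‖Nᵢ‖ = 1, and suppose: f_{i+1} ≠ fᵢ; ⟨f_{i+1} − fᵢ, Nᵢ⟩ = 0; ⟨ḟᵢ, Nᵢ⟩ = 1 and ⟨ḟ_{i+1}, Nᵢ⟩ = 1. Set ℓᵢ := ‖f_{i+1} − fᵢ‖ and sᵢ := ⟨n × Nᵢ, (f_{i+1}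 − fᵢ)/ℓᵢ⟩, and assume sᵢ ≠ 0 for all i. Then ½ ∑_{i ∈ ZMod m} (⟨ḟᵢ × f_{i+1}, n⟩ + ⟨fᵢ × ḟ_{i+1}, n⟩) = ∑_{i ∈ ZMod m} ℓᵢ (1 − ⟨n, Nᵢ⟩)/sᵢ. -/
/-!
Write `eᵢ = fᵢ₊₁ − fᵢ`. The summand is `gᵢ₊₁ − gᵢ − ⟨n × eᵢ, ḟᵢ⟩ − ⟨n × eᵢ, ḟᵢ₊₁⟩` with
`gᵢ = ⟨n × fᵢ, ḟᵢ⟩`, so the `g`-part telescopes around the closed polygon. Since `eᵢ` is orthogonal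
to both `n` and `Nᵢ`, a Gram-determinant identity gives, for every `q` with `⟨q, n⟩ = ⟨q, Nᵢ⟩ = 1`,
`⟨n × eᵢ, q⟩ ⟨n × Nᵢ, eᵢ⟩ = ‖eᵢ‖² (⟨n, Nᵢ⟩ − 1)`, i.e. `⟨n × eᵢ, q⟩ = −ℓᵢ (1 − ⟨n, Nᵢ⟩)/sᵢ`.
Both velocities `ḟᵢ`, `ḟᵢ₊₁` are such `q`.
-/

open scoped RealInnerProductSpace

open Finset

lemma inner_eq_sum_three (x y : EuclideanSpace ℝ (Fin 3)) :
    ⟪x, y⟫ = x 0 * y 0 + x 1 * y 1 + x 2 * y 2 := by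
  simp [PiLp.inner_apply, Fin.sum_univ_three, mul_comm]

lemma e3_apply_zero (x y z : ℝ) : e3 x y z 0 = x := rfl
lemma e3_apply_one (x y z : ℝ) : e3 x y z 1 = y := rfl
lemma e3_apply_two (x y z : ℝ) : e3 x y z 2 = z := rfl

lemma inner_cross3_add_inner_cross3 (n a b a' b' : EuclideanSpace ℝ (Fin 3)) :
    ⟪cross3 a' b, n⟫ + ⟪cross3 a b', n⟫ =
      (⟪cross3 n b, b'⟫ - ⟪cross3 n a, a'⟫) - ⟪cross3 n (b - a), a'⟫ - ⟪cross3 n (b - a), b'⟫ := by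
  simp only [inner_eq_sum_three, cross3, e3_apply_zero, e3_apply_one, e3_apply_two,
    PiLp.sub_apply]
  ring

lemma inner_cross3_swap (a b c : EuclideanSpace ℝ (Fin 3)) :
    ⟪cross3 a b, c⟫ = -⟪cross3 a c, b⟫ := by
  simp only [inner_eq_sum_three, cross3, e3_apply_zero, e3_apply_one, e3_apply_two]
  ring

lemma inner_cross3_mul_inner_cross3_of_inner_eq_zero {n e q N : EuclideanSpace ℝ (Fin 3)}
    (hne : ⟪n, e⟫ = 0) (heN : ⟪e, N⟫ = 0) :
    ⟪cross3 n e, q⟫ * ⟪cross3 n N, e⟫ = ⟪e, e⟫ * (⟪q, n⟫ * ⟪n, N⟫ - ⟪n, n⟫ * ⟪q, N⟫) := by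
  -- `det[n, e, q] · det[n, e, N]` is the determinant of the matrix of inner products
  have gram : ⟪cross3 n e, q⟫ * ⟪cross3 n e, N⟫ =
      ⟪n, n⟫ * (⟪e, e⟫ * ⟪q, N⟫ - ⟪q, e⟫ * ⟪e, N⟫) - ⟪n, e⟫ * (⟪n, e⟫ * ⟪q, N⟫ - ⟪q, n⟫ * ⟪e, N⟫)
        + ⟪n, N⟫ * (⟪n, e⟫ * ⟪q, e⟫ - ⟪q, n⟫ * ⟪e, e⟫) := by
    simp only [inner_eq_sum_three, cross3, e3_apply_zero, e3_apply_one, e3_apply_two]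
    ring
  rw [hne, heN] at gram
  rw [inner_cross3_swap n N e]
  linear_combination -gram

lemma inner_cross3_eq_div_of_inner_eq_one {n e q N : EuclideanSpace ℝ (Fin 3)} {ℓ s : ℝ}
    (hnn : ⟪n, n⟫ = 1) (hne : ⟪n, e⟫ = 0) (heN : ⟪e, N⟫ = 0) (hqn : ⟪q, n⟫ = 1)
    (hqN : ⟪q, N⟫ = 1) (he : e ≠ 0) (hℓ : ℓ = ‖e‖) (hs : s = ⟪cross3 n N, ℓ⁻¹ • e⟫)
    (hs0 : s ≠ 0) :
    ⟪cross3 n e, q⟫ = ℓ * (⟪n, N⟫ - 1) / s := by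
  have hℓ0 : ℓ ≠ 0 := hℓ ▸ norm_ne_zero_iff.2 he
  have hee : ⟪e, e⟫ = ℓ ^ 2 := by rw [hℓ, real_inner_self_eq_norm_sq]
  have hNe : ⟪cross3 n N, e⟫ = ℓ * s := by
    rw [hs, inner_smul_right, mul_inv_cancel_left₀ hℓ0]
  have key := inner_cross3_mul_inner_cross3_of_inner_eq_zero (q := q) hne heN
  rw [hNe, hee, hqn, hqN, hnn] at key
  rw [eq_div_iff hs0]
  apply mul_left_cancel₀ hℓ0
  linear_combination key

lemma Fintype.sum_sub_comp_add_eq_zero {G M : Type*} [AddGroup G] [Fintype G] [AddCommGroup M]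
    (g : G → M) (a : G) : ∑ i, (g (i + a) - g i) = 0 := by
  rw [sum_sub_distrib, sub_eq_zero]
  exact Equiv.sum_comp (Equiv.addRight a) g

theorem stmt_11_general (m : ℕ) [NeZero m]
    (f fdot : ZMod m → EuclideanSpace ℝ (Fin 3))
    (n : EuclideanSpace ℝ (Fin 3)) (hn : ‖n‖ = 1)
    (h : ℝ)
    (hf : ∀ i, ⟪f i, n⟫ = h) (hfdot : ∀ i, ⟪fdot i, n⟫ = 1)
    (N : ZMod m → EuclideanSpace ℝ (Fin 3))
    (hne : ∀ i, f (i + 1) ≠ f i)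
    (horth : ∀ i, ⟪f (i + 1) - f i, N i⟫ = 0)
    (hh1 : ∀ i, ⟪fdot i, N i⟫ = 1) (hh2 : ∀ i, ⟪fdot (i + 1), N i⟫ = 1)
    (ℓ : ZMod m → ℝ) (hℓ : ∀ i, ℓ i = ‖f (i + 1) - f i‖)
    (s : ZMod m → ℝ) (hs : ∀ i, s i = ⟪cross3 n (N i), (ℓ i)⁻¹ • (f (i + 1) - f i)⟫)
    (hs0 : ∀ i, s i ≠ 0) :
    (1 / 2) * ∑ i, (⟪cross3 (fdot i) (f (i + 1)), n⟫ + ⟪cross3 (f i) (fdot (i + 1)), n⟫) =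
      ∑ i, ℓ i * (1 - ⟪n, N i⟫) / s i := by
  have hnn : ⟪n, n⟫ = 1 := by rw [real_inner_self_eq_norm_sq, hn, one_pow]
  have edge : ∀ i q, ⟪q, n⟫ = 1 → ⟪q, N i⟫ = 1 →
      ⟪cross3 n (f (i + 1) - f i), q⟫ = ℓ i * (⟪n, N i⟫ - 1) / s i := fun i q hqn hqN =>
    inner_cross3_eq_div_of_inner_eq_one hnn
      (by rw [inner_sub_right, real_inner_comm, hf, real_inner_comm, hf, sub_self])
      (horth i) hqn hqN (sub_ne_zero.2 (hne i)) (hℓ i) (hs i) (hs0 i)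
  let g i := ⟪cross3 n (f i), fdot i⟫
  have summand : ∀ i, ⟪cross3 (fdot i) (f (i + 1)), n⟫ + ⟪cross3 (f i) (fdot (i + 1)), n⟫ =
      (g (i + 1) - g i) + 2 * (ℓ i * (1 - ⟪n, N i⟫) / s i) := fun i => by
    rw [inner_cross3_add_inner_cross3, edge i _ (hfdot i) (hh1 i),
      edge i _ (hfdot (i + 1)) (hh2 i)]
    ring
  rw [sum_congr rfl fun i _ => summand i, sum_add_distrib,
    Fintype.sum_sub_comp_add_eq_zero g, zero_add, mul_sum]
  exact sum_congr rfl fun i _ => by ring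

/-- Infinitesimal discrete Steiner formula (Karpenkov–Wallner), single face: offsetting every
face in parallel at unit speed, the derivative of the signed face area equals `2H`, i.e.
`½ d(Area) = ∑ᵢ ℓᵢ(1 − ⟨n, Nᵢ⟩)/sᵢ`. -/
theorem stmt_11 (m : ℕ) [NeZero m] (hm : 3 ≤ m)
    (f fdot : ZMod m → EuclideanSpace ℝ (Fin 3))
    (n : EuclideanSpace ℝ (Fin 3)) (hn : ‖n‖ = 1)
    (h : ℝ)
    (hf : ∀ i, ⟪f i, n⟫ = h) (hfdot : ∀ i, ⟪fdot i, n⟫ = 1)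
    (N : ZMod m → EuclideanSpace ℝ (Fin 3)) (hN : ∀ i, ‖N i‖ = 1)
    (hne : ∀ i, f (i + 1) ≠ f i)
    (horth : ∀ i, ⟪f (i + 1) - f i, N i⟫ = 0)
    (hh1 : ∀ i, ⟪fdot i, N i⟫ = 1) (hh2 : ∀ i, ⟪fdot (i + 1), N i⟫ = 1)
    (ℓ : ZMod m → ℝ) (hℓ : ∀ i, ℓ i = ‖f (i + 1) - f i‖)
    (s : ZMod m → ℝ) (hs : ∀ i, s i = ⟪cross3 n (N i), (ℓ i)⁻¹ • (f (i + 1) - f i)⟫)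
    (hs0 : ∀ i, s i ≠ 0) :
    (1 / 2) * ∑ i, (⟪cross3 (fdot i) (f (i + 1)), n⟫ + ⟪cross3 (f i) (fdot (i + 1)), n⟫) =
      ∑ i, ℓ i * (1 - ⟪n, N i⟫) / s i :=
  stmt_11_general m f fdot n hn h hf hfdot N hne horth hh1 hh2 ℓ hℓ s hs hs0
end
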